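/- The ideal of ℤ[x,y,z] generated by {(y^l - Σ_{s=0}^{l} binom(l,s) x^s)·f_{md-1}(x,y,z) : l ≥ 1, m ≥ 1} equals the principal ideal generated by (y - x - 1)·f_{d-1}(x,y,z). -/
import Mathlib


/-- The polynomials f_k(x,y,z) ∈ ℤ[x,y,z] (x = X 0, y = X 1, z = X 2) of
Definition 3.19, depending on d: f_0 = 1, f_1 = y, f_d = z,
f_{md+l} = y·f_{md+l-1} - x·f_{md+l-2} for m ≥ 0 and 1 ≤ l ≤ d-1, and
f_{(m+1)d} = z·f_{md} - x·f_{(m+1)d-2} - Σ_{i=2}^{d-1} x^i·f_{md-1} - x^d·f_{(m-1)d}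
for m ≥ 1. -/
noncomputable def f3 (d : ℕ) : ℕ → MvPolynomial (Fin 3) ℤ
  | 0 => 1
  | 1 => MvPolynomial.X 1
  | k + 2 =>
    if _h : (k + 2) % d = 0 then
      if k + 2 = d then MvPolynomial.X 2
      else
        MvPolynomial.X 2 * f3 d (k + 2 - d) - MvPolynomial.X 0 * f3 d k
          - (∑ i ∈ Finset.Icc 2 (d - 1), MvPolynomial.X 0 ^ i * f3 d (k + 2 - d - 1))
          - MvPolynomial.X 0 ^ d * f3 d (k + 2 - 2 * d)
    else MvPolynomial.X 1 * f3 d (k + 1) - MvPolynomial.X 0 * f3 d k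
  termination_by k => k
  decreasing_by
    all_goals
      first
        | omega
        | (have hd : d ≠ 0 := by rintro rfl; omega
           omega)

open MvPolynomial Finset

lemma f3_rec (d k : ℕ) (h : (k + 2) % d ≠ 0) :
    f3 d (k + 2) = X 1 * f3 d (k + 1) - X 0 * f3 d k := by
  rw [f3, dif_neg h]

lemma f3_zero (d : ℕ) : f3 d 0 = 1 := by rw [f3]
lemma f3_one (d : ℕ) : f3 d 1 = X 1 := by rw [f3]

lemma mod_ne (d m l : ℕ) (hl : 0 < l) (hld : l < d) : (m * d + l) % d ≠ 0 := by
  rw [Nat.add_comm, Nat.add_mul_mod_self_right, Nat.mod_eq_of_lt hld]; omega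

lemma f3_block (d : ℕ) (hd : 2 ≤ d) (m : ℕ) (hm : 1 ≤ m) :
    ∀ l, 1 ≤ l → l ≤ d - 1 →
      f3 d (m * d + l) = f3 d l * f3 d (m * d) - X 0 * f3 d (l - 1) * f3 d (m * d - 1) := by
  have hmd : 2 ≤ m * d := le_trans hd (Nat.le_mul_of_pos_left d hm)
  intro l
  induction l using Nat.strong_induction_on with
  | _ l ih =>
    intro hl hld
    match l, hl with
    | 1, _ =>
      have e1 : m * d + 1 = (m * d - 1) + 2 := by omega
      have e2 : (m * d - 1) + 1 = m * d := by omega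
      rw [e1, f3_rec, e2]
      · rw [f3_one, f3_zero]; ring
      · rw [← e1]; exact mod_ne d m 1 one_pos (by omega)
    | l + 2, _ =>
      have hld' : l + 2 < d := by omega
      have e1 : m * d + (l + 2) = (m * d + l) + 2 := by ring
      rw [e1, f3_rec _ _ (by rw [← e1]; exact mod_ne d m (l+2) (by omega) hld')]
      have hf : f3 d (l + 2) = X 1 * f3 d (l + 1) - X 0 * f3 d l := by
        rw [f3, dif_neg]
        rw [Nat.mod_eq_of_lt hld']; omega
      rcases Nat.eq_zero_or_pos l with rfl | hlpos
      · have e2 : m * d + 0 + 1 = (m * d - 1) + 2 := by omega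
        have e3 : (m * d - 1) + 1 = m * d := by omega
        rw [e2, f3_rec _ _ (by rw [← e2]; exact mod_ne d m 1 one_pos (by omega)), e3, hf]
        rw [f3_one, f3_zero]; ring
      · obtain ⟨l', rfl⟩ : ∃ l', l = l' + 1 := ⟨l - 1, by omega⟩
        have h1 := ih (l' + 2) (by omega) (by omega) (by omega)
        have h2 := ih (l' + 1) (by omega) (by omega) (by omega)
        have hf1 : f3 d (l' + 2) = X 1 * f3 d (l' + 1) - X 0 * f3 d l' := by
          rw [f3, dif_neg]
          rw [Nat.mod_eq_of_lt (by omega)]; omega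
        have e2 : m * d + (l' + 1) + 1 = m * d + (l' + 2) := by ring
        have e3 : l' + 2 - 1 = l' + 1 := by omega
        have e4 : l' + 1 - 1 = l' := by omega
        have e5 : l' + 1 + 2 - 1 = l' + 2 := by omega
        rw [e2, h1, h2, e3, e4, e5, hf, hf1]
        ring

lemma f3_dvd (d : ℕ) (hd : 2 ≤ d) : ∀ m, 1 ≤ m → f3 d (d - 1) ∣ f3 d (m * d - 1) := by
  intro m hm
  induction m with
  | zero => omega
  | succ m ih =>
    rcases Nat.eq_zero_or_pos m with rfl | hmpos
    · simp
    · have e : (m + 1) * d - 1 = m * d + (d - 1) := by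
        have : (m + 1) * d = m * d + d := by ring
        omega
      rw [e, f3_block d hd m hmpos (d - 1) (by omega) le_rfl]
      exact dvd_sub (Dvd.dvd.mul_right dvd_rfl _) (((ih hmpos).mul_left _))


open MvPolynomial Finset in
/-- the ideal of ℤ[x,y,z] generated by the elements
(y^l - Σ_{s=0}^{l} binom(l,s) x^s)·f_{md-1}(x,y,z), for l ≥ 1 and m ≥ 1,
equals the principal ideal generated by (y - x - 1)·f_{d-1}(x,y,z). -/
theorem ideal_eq_principal (d : ℕ) (hd : 2 ≤ d) :
    Ideal.span {p : MvPolynomial (Fin 3) ℤ | ∃ l m : ℕ, 1 ≤ l ∧ 1 ≤ m ∧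
        p = (X 1 ^ l - ∑ s ∈ Finset.range (l + 1), (C (l.choose s : ℤ)) * X 0 ^ s) *
              f3 d (m * d - 1)} =
    Ideal.span {(X 1 - X 0 - 1 : MvPolynomial (Fin 3) ℤ) * f3 d (d - 1)} := by
  apply le_antisymm
  · rw [Ideal.span_le]
    rintro p ⟨l, m, hl, hm, rfl⟩
    rw [SetLike.mem_coe, Ideal.mem_span_singleton]
    have hsum : ∑ s ∈ Finset.range (l + 1), (C (l.choose s : ℤ)) * X 0 ^ s
        = ((X 0 + 1 : MvPolynomial (Fin 3) ℤ)) ^ l := by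
      rw [add_pow]
      refine Finset.sum_congr rfl fun s _ => ?_
      rw [one_pow, mul_one, C_eq_coe_nat]
      ring
    rw [hsum]
    apply mul_dvd_mul
    · have : (X 1 - X 0 - 1 : MvPolynomial (Fin 3) ℤ) = X 1 - (X 0 + 1) := by ring
      rw [this]
      exact sub_dvd_pow_sub_pow _ _ l
    · exact f3_dvd d hd m hm
  · rw [Ideal.span_le, Set.singleton_subset_iff]
    apply Ideal.subset_span
    refine ⟨1, 1, le_rfl, le_rfl, ?_⟩
    rw [one_mul]
    congr 1
    simp [Finset.sum_range_succ]
    ring
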